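/- Let B ≥ 8 and let a : Fin B → ℝ be strictly increasing with all values positive. Consider the family of subset sums σ(S) = ∑_{i∈S} a i over all S ⊆ Fin B. Define the candidate collection C of 13 subsets: ∅, {0}, {1}, {2}, {3}, {4}, {5}, {6}, {0,1}, {0,2}, {1,2}, {0,3}, {0,1,2}. Then for every subset T ∉ C, there exist at least 8 subsets S ∈ C with σ(S) < σ(T). In particular, the 8 smallest subset sums are all attained by subsets in C. -/

import Mathlib

/-- Subset sum of `a` over a finset. -/
def sigmaSum {B : ℕ} (a : Fin B → ℝ) (S : Finset (Fin B)) : ℝ := ∑ i ∈ S, a i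

/-- The 13 candidate error patterns for a rate-1 node with list size 8:
∅, {0}, {1}, {2}, {3}, {4}, {5}, {6}, {0,1}, {0,2}, {1,2}, {0,3}, {0,1,2}. -/
def candR1 {B : ℕ} (hB : 8 ≤ B) : Finset (Finset (Fin B)) :=
  {∅, {⟨0, by omega⟩}, {⟨1, by omega⟩}, {⟨2, by omega⟩}, {⟨3, by omega⟩},
    {⟨4, by omega⟩}, {⟨5, by omega⟩}, {⟨6, by omega⟩},
    {⟨0, by omega⟩, ⟨1, by omega⟩}, {⟨0, by omega⟩, ⟨2, by omega⟩},
    {⟨1, by omega⟩, ⟨2, by omega⟩}, {⟨0, by omega⟩, ⟨3, by omega⟩},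
    {⟨0, by omega⟩, ⟨1, by omega⟩, ⟨2, by omega⟩}}

/-! Sums of an increasing nonnegative weight are monotone for the domination order
`Dominated S M` (for every `k ∈ S`, `M` has at least as many elements `≥ k` as `S`): match the
largest element of `S` with an element of `M` above it and induct. A subset `T` outside the
candidates has a larger sum than `{6}`, `{0, 3}` or `{0, 1, 2}` according as `#T = 1`, `2` or
`≥ 3` (the last by an exchange argument against the initial segment `{0, 1, 2}`), and each of
these three dominates eight candidates, which is a finite computation in `Fin 8`. -/

open Finset

section Dominated

variable {ι : Type*} [LinearOrder ι]

def Dominated (S M : Finset ι) : Prop :=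
  ∀ k ∈ S, #{i ∈ S | k ≤ i} ≤ #{i ∈ M | k ≤ i}

instance (S M : Finset ι) : Decidable (Dominated S M) :=
  inferInstanceAs (Decidable (∀ k ∈ S, _))

theorem Dominated.of_insert {s m : ι} {S M : Finset ι} (h : Dominated (insert s S) M)
    (hS : ∀ x ∈ S, x < s) (hm : m ∈ M) (hsm : s ≤ m) : Dominated S (M.erase m) := by
  intro k hk
  have hks : k < s := hS k hk
  have hsk : s ∉ {i ∈ S | k ≤ i} := by simp only [mem_filter]; exact fun h => (hS s h.1).false
  have hmk : m ∈ {i ∈ M | k ≤ i} := mem_filter.2 ⟨hm, hks.le.trans hsm⟩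
  have := h k (mem_insert_of_mem hk)
  rw [filter_insert, if_pos hks.le, card_insert_of_notMem hsk] at this
  rw [filter_erase, card_erase_of_mem hmk]
  omega

theorem sum_le_sum_of_dominated {b : ι → ℝ} (hb : Monotone b) (hb0 : ∀ i, 0 ≤ b i)
    {S M : Finset ι} (h : Dominated S M) : ∑ i ∈ S, b i ≤ ∑ i ∈ M, b i := by
  induction S using induction_on_max generalizing M with
  | empty => simpa using sum_nonneg fun i _ => hb0 i
  | insert s S hS ih =>
    have hsS : s ∉ S := fun h => (hS s h).false
    obtain ⟨m, hm, hsm⟩ : ∃ m ∈ M, s ≤ m := by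
      have hs : 0 < #{i ∈ insert s S | s ≤ i} := card_pos.2 ⟨s, by simp⟩
      obtain ⟨m, hm⟩ := card_pos.1 (hs.trans_le (h s (mem_insert_self s S)))
      exact ⟨m, mem_filter.1 hm⟩
    rw [sum_insert hsS, ← add_sum_erase M b hm]
    exact add_le_add (hb hsm) (ih (h.of_insert hS hm hsm))

theorem card_filter_dominated_le {b : ι → ℝ} (hb : Monotone b) (hb0 : ∀ i, 0 ≤ b i)
    (C : Finset (Finset ι)) {M : Finset ι} {t : ℝ} (hM : ∑ i ∈ M, b i < t) :
    #{S ∈ C | Dominated S M} ≤ #{S ∈ C | ∑ i ∈ S, b i < t} :=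
  card_le_card <| monotone_filter_right C fun _ _ hS =>
    (sum_le_sum_of_dominated hb hb0 hS).trans_lt hM

end Dominated

theorem sum_lt_sum_of_forall_lt_of_card_le {ι : Type*} [LinearOrder ι] {a : ι → ℝ}
    (ha : StrictMono a) (hpos : ∀ i, 0 < a i) {R T : Finset ι}
    (hR : ∀ r ∈ R, ∀ t ∉ R, r < t) (hcard : #R ≤ #T) (hne : T ≠ R) :
    ∑ i ∈ R, a i < ∑ i ∈ T, a i := by
  rw [← sub_pos, ← sum_sdiff_sub_sum_sdiff, sub_pos]
  have hX : (T \ R).Nonempty :=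
    nonempty_of_ne_empty fun h =>
      hne (eq_of_subset_of_card_le (sdiff_eq_empty_iff_subset.1 h) hcard)
  set x := (T \ R).min' hX
  have hx : x ∈ T \ R := min'_mem _ hX
  have hYX : #(R \ T) ≤ #(T \ R) := card_sdiff_le_card_sdiff_iff.2 hcard
  have hlow : ∀ y ∈ R \ T, a y < a x := fun y hy =>
    ha (hR y (mem_sdiff.1 hy).1 x (mem_sdiff.1 hx).2)
  have hhigh : #(T \ R) • a x ≤ ∑ i ∈ T \ R, a i :=
    card_nsmul_le_sum _ _ _ fun i hi => ha.monotone (min'_le _ i hi)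
  rcases (R \ T).eq_empty_or_nonempty with hY | hY
  · rw [hY, sum_empty]
    exact sum_pos (fun i _ => hpos i) hX
  · calc ∑ i ∈ R \ T, a i < ∑ _i ∈ R \ T, a x := sum_lt_sum_of_nonempty hY hlow
      _ = #(R \ T) • a x := sum_const _
      _ ≤ #(T \ R) • a x := nsmul_le_nsmul_left (hpos x).le hYX
      _ ≤ _ := hhigh

theorem candR1_eq_map {B : ℕ} (hB : 8 ≤ B) :
    candR1 hB = (candR1 le_rfl).map (mapEmbedding (Fin.castLEEmb hB)).toEmbedding := by
  simp only [candR1, map_insert, map_singleton, map_empty, RelEmbedding.coe_toEmbedding,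
    mapEmbedding_apply]
  rfl

theorem card_filter_candR1_sigmaSum_lt {B : ℕ} (hB : 8 ≤ B) (a : Fin B → ℝ) (t : ℝ) :
    #{S ∈ candR1 hB | sigmaSum a S < t} =
      #{S ∈ candR1 le_rfl | sigmaSum (a ∘ Fin.castLE hB) S < t} := by
  rw [candR1_eq_map, filter_map, card_map]
  simp [Function.comp_def, sigmaSum]

def candR1Tops : Finset (Finset (Fin 8)) := {{6}, {0, 3}, {0, 1, 2}}

set_option maxRecDepth 10000 in
theorem eight_le_card_filter_candR1_dominated :
    ∀ M ∈ candR1Tops, 8 ≤ #{S ∈ candR1 le_rfl | Dominated S M} := by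
  decide

section LowerBounds

variable {B : ℕ} {hB : 8 ≤ B} {a : Fin B → ℝ}

theorem lt_sigmaSum_of_card_eq_one (hmono : StrictMono a) {T : Finset (Fin B)}
    (hT : T ∉ candR1 hB) (hcard : #T = 1) : a ⟨6, by omega⟩ < sigmaSum a T := by
  obtain ⟨⟨k, hk⟩, rfl⟩ := card_eq_one.1 hcard
  have h7 : 7 ≤ k := by
    by_contra! h
    interval_cases k <;> simp [candR1] at hT
  rw [sigmaSum, sum_singleton]
  exact hmono (Fin.mk_lt_mk.2 h7)

theorem lt_sigmaSum_of_card_eq_two (hmono : StrictMono a) {T : Finset (Fin B)}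
    (hT : T ∉ candR1 hB) (hcard : #T = 2) :
    a ⟨0, by omega⟩ + a ⟨3, by omega⟩ < sigmaSum a T := by
  obtain ⟨x, y, hxy, rfl⟩ := card_eq_two.1 hcard
  rw [sigmaSum, sum_pair hxy]
  clear hcard
  wlog hlt : x < y generalizing x y
  · rw [pair_comm] at hT
    rw [add_comm (a x)]
    exact this y x hxy.symm hT (lt_of_le_of_ne (not_lt.1 hlt) hxy.symm)
  obtain ⟨i, hi⟩ := x
  obtain ⟨j, hj⟩ := y
  rw [Fin.mk_lt_mk] at hlt
  have hgood : ¬(i = 0 ∧ j ≤ 3 ∨ i = 1 ∧ j = 2) := by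
    rintro (⟨rfl, hj3⟩ | ⟨rfl, rfl⟩)
    · interval_cases j <;> simp [candR1] at hT
    · simp [candR1] at hT
  rcases Nat.eq_zero_or_pos i with rfl | hi0
  · have h3j : a ⟨3, by omega⟩ < a ⟨j, hj⟩ := hmono (Fin.mk_lt_mk.2 (by omega))
    linarith
  · have h0i : a ⟨0, by omega⟩ < a ⟨i, hi⟩ := hmono (Fin.mk_lt_mk.2 hi0)
    have h3j : a ⟨3, by omega⟩ ≤ a ⟨j, hj⟩ := hmono.monotone (Fin.mk_le_mk.2 (by omega))
    linarith

theorem lt_sigmaSum_of_three_le_card (hpos : ∀ i, 0 < a i) (hmono : StrictMono a)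
    {T : Finset (Fin B)} (hT : T ∉ candR1 hB) (hcard : 3 ≤ #T) :
    a ⟨0, by omega⟩ + a ⟨1, by omega⟩ + a ⟨2, by omega⟩ < sigmaSum a T := by
  let R : Finset (Fin B) := {⟨0, by omega⟩, ⟨1, by omega⟩, ⟨2, by omega⟩}
  have hR : ∀ r ∈ R, ∀ t ∉ R, r < t := by
    simp only [R, mem_insert, mem_singleton, Fin.ext_iff, Fin.lt_def]
    omega
  have hsum : sigmaSum a R = a ⟨0, by omega⟩ + a ⟨1, by omega⟩ + a ⟨2, by omega⟩ := by
    simp [R, sigmaSum, Fin.ext_iff, add_assoc]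
  rw [← hsum]
  refine sum_lt_sum_of_forall_lt_of_card_le hmono hpos hR ?_ ?_
  · exact card_le_three.trans hcard
  · intro hTR
    exact hT (hTR ▸ by simp [candR1, R])

theorem exists_mem_candR1Tops_sigmaSum_lt (hpos : ∀ i, 0 < a i) (hmono : StrictMono a)
    {T : Finset (Fin B)} (hT : T ∉ candR1 hB) :
    ∃ M ∈ candR1Tops, sigmaSum (a ∘ Fin.castLE hB) M < sigmaSum a T := by
  obtain h0 | h1 | h2 | h3 : #T = 0 ∨ #T = 1 ∨ #T = 2 ∨ 3 ≤ #T := by omega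
  · exact absurd (by simp [card_eq_zero.1 h0, candR1]) hT
  · refine ⟨{6}, by simp [candR1Tops], ?_⟩
    simpa [sigmaSum, Fin.castLE] using lt_sigmaSum_of_card_eq_one hmono hT h1
  · refine ⟨{0, 3}, by simp [candR1Tops], ?_⟩
    simpa [sigmaSum, Fin.castLE] using lt_sigmaSum_of_card_eq_two hmono hT h2
  · refine ⟨{0, 1, 2}, by simp [candR1Tops], ?_⟩
    simpa [sigmaSum, Fin.castLE, add_assoc] using lt_sigmaSum_of_three_le_card hpos hmono hT h3

end LowerBounds

/-- Proposition 1: for every subset `T` outside the 13-element candidate collection,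
at least 8 candidates have strictly smaller subset sum; hence the 8 smallest subset
sums are all attained within the candidate collection. -/
theorem rate1_candidates_suffice {B : ℕ} (hB : 8 ≤ B) (a : Fin B → ℝ)
    (hpos : ∀ i, 0 < a i) (hmono : StrictMono a) :
    ∀ T : Finset (Fin B), T ∉ candR1 hB →
      8 ≤ ((candR1 hB).filter (fun S => sigmaSum a S < sigmaSum a T)).card := by
  intro T hT
  obtain ⟨M, hM, hMT⟩ := exists_mem_candR1Tops_sigmaSum_lt hpos hmono hT
  have hb : Monotone (a ∘ Fin.castLE hB) := (hmono.comp (Fin.strictMono_castLE hB)).monotone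
  rw [card_filter_candR1_sigmaSum_lt]
  exact (eight_le_card_filter_candR1_dominated M hM).trans
    (card_filter_dominated_le hb (fun i => (hpos _).le) _ hMT)
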